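/- arXiv:2010.15102 — 6 statements merged into one kernel-verified Lean document; each statement's English description precedes it below -/
import Mathlib

section
/- Suppose Assumption (Ass) holds, so the pseudo-Friedrichs extension H_V is defined by H_V = G₀^{1/2}(H₀G₀^{-1} + [B G₀^{-1/2}]* A G₀^{-1/2}) G₀^{1/2} with its natural domain. Then for any λ₀ ∈ ρ(H₀) with −1 ∉ σ(K(λ₀)), λ₀ ∈ ρ(H_V) and (H_V − λ₀)^{-1} = G₀^{-1/2}([H₀ − λ₀]G₀^{-1} + [B G₀^{-1/2}]* A G₀^{-1/2})^{-1} G₀^{-1/2}. In particular, H_V is a closed operator. -/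
open ContinuousLinearMap

noncomputable section

/-- An abstract encoding of the setting of Assumption 1.1 of
Hansmann–Krejčiřík.  The self-adjoint operator `H₀` in the Hilbert space `H`
is encoded through the *bounded* operators
`S = G₀^{-1/2} = (|H₀|+1)^{-1/2}` and `T = H₀ G₀^{-1}`,
and the relatively bounded factors `A, B` of the perturbation `V = B^*A`
through the bounded operators `a = A G₀^{-1/2}` and `b = B G₀^{-1/2}`. -/
structure BSSetup (H H' : Type*) [NormedAddCommGroup H] [InnerProductSpace ℂ H]
    [CompleteSpace H] [NormedAddCommGroup H'] [InnerProductSpace ℂ H'] [CompleteSpace H'] where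
  /-- `S` represents `G₀^{-1/2} = (|H₀|+1)^{-1/2}`. -/
  S : H →L[ℂ] H
  /-- `T` represents `H₀ G₀^{-1}`. -/
  T : H →L[ℂ] H
  /-- `a` represents the bounded operator `A G₀^{-1/2}`. -/
  a : H →L[ℂ] H'
  /-- `b` represents the bounded operator `B G₀^{-1/2}`. -/
  b : H →L[ℂ] H'
  S_sa : IsSelfAdjoint S
  T_sa : IsSelfAdjoint T
  S_pos : ∀ x : H, 0 ≤ (inner ℂ x (S x) : ℂ).re
  S_inj : Function.Injective S
  S_dense : DenseRange S
  S_norm : ‖S‖ ≤ 1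
  comm : S * T = T * S
  /-- `|H₀| G₀^{-1} = 1 - S²`, i.e. `T² = (H₀ G₀^{-1})² = (1-S²)²`. -/
  T_sq : T * T = (1 - S * S) * (1 - S * S)

namespace BSSetup

variable {H H' : Type*} [NormedAddCommGroup H] [InnerProductSpace ℂ H]
  [CompleteSpace H] [NormedAddCommGroup H'] [InnerProductSpace ℂ H'] [CompleteSpace H']
  (P : BSSetup H H')

/-- The bounded operator `(H₀ - z) G₀^{-1}`. -/
def Tz (z : ℂ) : H →L[ℂ] H := P.T - z • (P.S * P.S)

/-- The resolvent set `ρ(H₀)`:  `z ∈ ρ(H₀)` iff `(H₀ - z)G₀^{-1}` is boundedly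
invertible. -/
def res : Set ℂ := {z | IsUnit (P.Tz z)}

/-- The spectrum `σ(H₀)`. -/
def spec : Set ℂ := {z | ¬ IsUnit (P.Tz z)}

/-- The point spectrum `σ_p(H₀)`: eigenvectors of `H₀` are of the form `ψ = G₀^{-1} x`. -/
def pointSpec : Set ℂ := {z | ∃ x : H, x ≠ 0 ∧ P.Tz z x = 0}

/-- The continuous spectrum `σ_c(H₀)`: `z ∈ σ(H₀)`, `z` is not an eigenvalue and
the range of `H₀ - z` (which equals the range of `(H₀-z)G₀^{-1}`) is dense. -/
def contSpec : Set ℂ :=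
  {z | ¬ IsUnit (P.Tz z) ∧ (∀ x : H, P.Tz z x = 0 → x = 0) ∧ DenseRange (P.Tz z)}

/-- The Birman–Schwinger operator
`K(z) = [A G₀^{-1/2}][G₀(H₀ - z)^{-1}][B G₀^{-1/2}]^*`. -/
def K (z : ℂ) : H' →L[ℂ] H' :=
  P.a ∘L (Ring.inverse (P.Tz z)) ∘L (ContinuousLinearMap.adjoint P.b)

/-- `W = H₀ G₀^{-1} + [B G₀^{-1/2}]^* A G₀^{-1/2}`; the pseudo-Friedrichs extension is
`H_V = G₀^{1/2} W G₀^{1/2}`, i.e. `ψ = S u ∈ Dom(H_V)` iff `W u ∈ Ran S`, and then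
`H_V (S u) = y` where `W u = S y`. -/
def W : H →L[ℂ] H := P.T + (ContinuousLinearMap.adjoint P.b) ∘L P.a

/-- The bounded operator `(H₀ - z)G₀^{-1} + [B G₀^{-1/2}]^* A G₀^{-1/2}`,
representing `(H_V - z)` conjugated with `G₀^{1/2}`. -/
def Wz (z : ℂ) : H →L[ℂ] H := P.W - z • (P.S * P.S)

/-- Assumption 1.1 (Ass): there is `λ₀ ∈ ρ(H₀)` with `-1 ∉ σ(K(λ₀))`. -/
def Ass : Prop := ∃ μ : ℂ, IsUnit (P.Tz μ) ∧ (-1 : ℂ) ∉ spectrum ℂ (P.K μ)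

end BSSetup

/-!
For `Tz z` invertible, `Wz z = (1 + b* (a (Tz z)⁻¹)) Tz z`, and by Jacobson's lemma the first
factor is invertible as soon as `1 + (a (Tz z)⁻¹) b* = 1 + K z` is, i.e. when `-1 ∉ σ(K z)`.
Once `Wz z` is invertible, `W u = S y` is equivalent to `Wz z u = S (y - z S u)`, so the graph
of `H_V` is `{(x, y) | x = S (Wz z)⁻¹ S (y - z x)}`, which is closed because `S (Wz z)⁻¹ S` is
bounded.
-/

namespace ContinuousLinearMap

variable {R M N : Type*} [Ring R] [TopologicalSpace M] [AddCommGroup M] [Module R M]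
  [IsTopologicalAddGroup M] [TopologicalSpace N] [AddCommGroup N] [Module R N]
  [IsTopologicalAddGroup N]

theorem ringInverse_apply_apply {T : M →L[R] M} (hT : IsUnit T) (x : M) :
    Ring.inverse T (T x) = x := by
  simpa using congr($(Ring.inverse_mul_cancel T hT) x)

theorem apply_ringInverse_apply {T : M →L[R] M} (hT : IsUnit T) (x : M) :
    T (Ring.inverse T x) = x := by
  simpa using congr($(Ring.mul_inverse_cancel T hT) x)

/-- Jacobson's lemma for operators between different spaces: if `u` inverts `1 + X Y`, then
`1 - Y u X` inverts `1 + Y X`. -/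
theorem isUnit_one_add_comp_comm {X : M →L[R] N} {Y : N →L[R] M}
    (h : IsUnit (1 + X ∘L Y)) : IsUnit (1 + Y ∘L X) := by
  obtain ⟨u, hu_right, hu_left⟩ := isUnit_iff_exists.mp h
  refine isUnit_iff_exists.mpr ⟨1 - Y ∘L u ∘L X, ?_, ?_⟩ <;> ext x
  · have := congr(Y ($hu_right (X x)))
    simp only [map_add, map_sub, mul_apply_eq_comp, add_apply, sub_apply, one_apply_eq_self,
      comp_apply] at this ⊢
    linear_combination (norm := abel_nf) -this
  · have := congr(Y ($hu_left (X x)))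
    simp only [map_add, mul_apply_eq_comp, add_apply, sub_apply, one_apply_eq_self,
      comp_apply] at this ⊢
    linear_combination (norm := abel_nf) -this

end ContinuousLinearMap

theorem spectrum.isUnit_one_add_of_neg_one_notMem {𝕜 A : Type*} [CommRing 𝕜] [Ring A]
    [Algebra 𝕜 A] {a : A} (h : (-1 : 𝕜) ∉ spectrum 𝕜 a) : IsUnit (1 + a) := by
  have := (spectrum.notMem_iff.mp h).neg
  rwa [map_neg, map_one, neg_sub, sub_neg_eq_add, add_comm] at this

namespace BSSetup

variable {H H' : Type*} [NormedAddCommGroup H] [InnerProductSpace ℂ H]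
  [CompleteSpace H] [NormedAddCommGroup H'] [InnerProductSpace ℂ H'] [CompleteSpace H']
  (P : BSSetup H H')

def pseudoFriedrichsGraph : Set (H × H) :=
  {p | ∃ u y : H, p.1 = P.S u ∧ P.W u = P.S y ∧ p.2 = y}

def pseudoFriedrichsResolvent (z : ℂ) : H →L[ℂ] H :=
  P.S * Ring.inverse (P.Wz z) * P.S

theorem Wz_eq_Tz_add (z : ℂ) : P.Wz z = P.Tz z + adjoint P.b ∘L P.a := by
  rw [Wz, W, Tz]
  abel

theorem W_apply_eq_Wz_add (z : ℂ) (v : H) : P.W v = P.Wz z v + z • P.S (P.S v) := by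
  simp [Wz]

theorem Wz_eq_mul_Tz {z : ℂ} (hz : IsUnit (P.Tz z)) :
    P.Wz z = (1 + adjoint P.b ∘L (P.a ∘L Ring.inverse (P.Tz z))) * P.Tz z := by
  rw [one_add_mul, P.Wz_eq_Tz_add, mul_def, comp_assoc, comp_assoc,
    ← mul_def (Ring.inverse _), Ring.inverse_mul_cancel _ hz, one_def, comp_id]

theorem isUnit_Wz {z : ℂ} (hz : IsUnit (P.Tz z)) (hK : (-1 : ℂ) ∉ spectrum ℂ (P.K z)) :
    IsUnit (P.Wz z) := by
  rw [P.Wz_eq_mul_Tz hz]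
  refine (isUnit_one_add_comp_comm ?_).mul hz
  rw [comp_assoc]
  exact spectrum.isUnit_one_add_of_neg_one_notMem hK

theorem mem_pseudoFriedrichsGraph_iff {z : ℂ} (hW : IsUnit (P.Wz z)) (x y : H) :
    (x, y) ∈ P.pseudoFriedrichsGraph ↔
      x = P.pseudoFriedrichsResolvent z (y - z • x) := by
  simp only [pseudoFriedrichsGraph, Set.mem_ofPred_eq]
  constructor
  · rintro ⟨u, y, rfl, huy, rfl⟩
    have : P.S (y - z • P.S u) = P.Wz z u := by
      rw [map_sub, map_smul, ← huy, P.W_apply_eq_Wz_add z]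
      abel
    simp only [pseudoFriedrichsResolvent, mul_apply_eq_comp, this, ringInverse_apply_apply hW]
  · intro hp
    refine ⟨Ring.inverse (P.Wz z) (P.S (y - z • x)), y, hp, ?_, rfl⟩
    have hx : P.S (Ring.inverse (P.Wz z) (P.S (y - z • x))) = x := hp.symm
    rw [P.W_apply_eq_Wz_add z, apply_ringInverse_apply hW, hx, map_sub, map_smul, sub_add_cancel]

theorem isClosed_pseudoFriedrichsGraph {z : ℂ} (hW : IsUnit (P.Wz z)) :
    IsClosed P.pseudoFriedrichsGraph := by
  have hgraph :
      P.pseudoFriedrichsGraph = {p | p.1 = P.pseudoFriedrichsResolvent z (p.2 - z • p.1)} :=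
    Set.ext fun p => P.mem_pseudoFriedrichsGraph_iff hW p.1 p.2
  rw [hgraph]
  exact isClosed_eq continuous_fst (by fun_prop)

end BSSetup

/-- Section 2, eq. (2.6).  Under Assumption (Ass), for any
`λ₀ ∈ ρ(H₀)` with `-1 ∉ σ(K(λ₀))`, the pseudo-Friedrichs extension
`H_V = G₀^{1/2}(H₀G₀^{-1} + [B G₀^{-1/2}]^* A G₀^{-1/2}) G₀^{1/2}` satisfies
`λ₀ ∈ ρ(H_V)` with
`(H_V - λ₀)^{-1} = G₀^{-1/2}([H₀-λ₀]G₀^{-1} + [B G₀^{-1/2}]^* A G₀^{-1/2})^{-1} G₀^{-1/2}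
 = S (W - λ₀ S²)⁻¹ S`; in particular `H_V` (whose graph is
`{(S u, y) | W u = S y}`) is a closed operator.  Here `ψ = S u ∈ Dom(H_V)` iff
`W u ∈ Ran S`, and `H_V (S u) = y` where `W u = S y`. -/
theorem BSSetup.resolvent_formula_and_closed
    {H H' : Type*} [NormedAddCommGroup H] [InnerProductSpace ℂ H]
    [CompleteSpace H] [NormedAddCommGroup H'] [InnerProductSpace ℂ H'] [CompleteSpace H']
    (P : BSSetup H H') (μ : ℂ) (hμ : IsUnit (P.Tz μ))
    (hK : (-1 : ℂ) ∉ spectrum ℂ (P.K μ)) :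
    IsUnit (P.Wz μ) ∧
    (∀ x : H, ∃ u : H,
        (P.S * Ring.inverse (P.Wz μ) * P.S) x = P.S u ∧
        P.W u = P.S (x + μ • (P.S * Ring.inverse (P.Wz μ) * P.S) x)) ∧
    (∀ u y : H, P.W u = P.S y →
        (P.S * Ring.inverse (P.Wz μ) * P.S) (y - μ • P.S u) = P.S u) ∧
    IsClosed {p : H × H | ∃ u y : H, p.1 = P.S u ∧ P.W u = P.S y ∧ p.2 = y} := by
  have hW := P.isUnit_Wz hμ hK
  refine ⟨hW, fun x => ?_, fun u y huy => ?_, P.isClosed_pseudoFriedrichsGraph hW⟩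
  · obtain ⟨u, y, hu, huy, rfl⟩ := (P.mem_pseudoFriedrichsGraph_iff hW _
      (x + μ • P.pseudoFriedrichsResolvent μ x)).2 (by rw [add_sub_cancel_right])
    exact ⟨u, hu, huy⟩
  · exact ((P.mem_pseudoFriedrichsGraph_iff hW _ _).1 ⟨u, y, rfl, huy, rfl⟩).symm
end
end

section
/- Suppose Assumption (Ass) holds and let H_V be the pseudo-Friedrichs extension. Then H_V is densely defined, i.e., Dom(H_V) is dense in H. -/
open ContinuousLinearMap

noncomputable section

/-!
Take `μ` from (Ass). In the bounded picture `W - μS² = (T - μS²)(1 + (R b*) a)` with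
`R = (T - μS²)⁻¹`, and `1 + (R b*) a` is invertible because `1 + a (R b*) = 1 + K(μ)` is.
So for every `y` the vector `u = (W - μS²)⁻¹ S y` satisfies `W u = S (y + μ S u)`, i.e.
`S u ∈ Dom(H_V)`, and these vectors `S u` are dense because `S` has dense range and
`(W - μS²)⁻¹` is onto.
-/

namespace ContinuousLinearMap

variable {R E F : Type*} [Ring R] [AddCommGroup E] [Module R E] [TopologicalSpace E]
  [IsTopologicalAddGroup E] [AddCommGroup F] [Module R F] [TopologicalSpace F]
  [IsTopologicalAddGroup F]

/-- Jacobson's lemma for operators between two spaces: `(1 + YX)⁻¹ = 1 - Y (1 + XY)⁻¹ X`. -/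
theorem isUnit_one_add_comp_swap {X : E →L[R] F} {Y : F →L[R] E}
    (h : IsUnit (1 + X ∘L Y)) : IsUnit (1 + Y ∘L X) := by
  obtain ⟨v, hv⟩ := h
  set w : F →L[R] F := ↑v⁻¹
  have hright (z : F) : w z + X (Y (w z)) = z := by
    have := congr($(v.mul_inv) z)
    rwa [hv, mul_apply_eq_comp, add_apply, one_apply_eq_self, comp_apply] at this
  have hleft (z : F) : w (z + X (Y z)) = z := by
    have := congr($(v.inv_mul) z)
    rwa [hv, mul_apply_eq_comp, add_apply, one_apply_eq_self, comp_apply] at this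
  refine isUnit_iff_exists.mpr ⟨1 - Y ∘L w ∘L X, ?_, ?_⟩ <;> ext x <;>
    simp only [mul_apply_eq_comp, add_apply, sub_apply, one_apply_eq_self, comp_apply, map_add,
      map_sub]
  · have := congr(Y $(hright (X x)))
    rw [map_add] at this
    linear_combination (norm := abel) -this
  · have := congr(Y $(hleft (X x)))
    rw [map_add, map_add] at this
    linear_combination (norm := abel) -this

end ContinuousLinearMap

namespace BSSetup

variable {H H' : Type*} [NormedAddCommGroup H] [InnerProductSpace ℂ H]
  [CompleteSpace H] [NormedAddCommGroup H'] [InnerProductSpace ℂ H'] [CompleteSpace H']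
  (P : BSSetup H H')

def domain : Set H := {ψ : H | ∃ u y : H, ψ = P.S u ∧ P.W u = P.S y}

theorem Wz_eq_Tz_mul {z : ℂ} (hz : IsUnit (P.Tz z)) :
    P.Wz z = P.Tz z * (1 + (Ring.inverse (P.Tz z) ∘L adjoint P.b) ∘L P.a) := by
  rw [mul_add, mul_one, P.Wz_eq_Tz_add, mul_def, ← comp_assoc, ← comp_assoc,
    ← mul_def (P.Tz z), Ring.mul_inverse_cancel _ hz, one_def, id_comp]

theorem isUnit_one_add_K {z : ℂ} (hK : (-1 : ℂ) ∉ spectrum ℂ (P.K z)) : IsUnit (1 + P.K z) := by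
  rw [spectrum.notMem_iff, map_neg, map_one, ← neg_add'] at hK
  exact (IsUnit.neg_iff _).mp hK

theorem S_mem_domain_of_Wz_eq_S {z : ℂ} {u y : H} (h : P.Wz z u = P.S y) :
    P.S u ∈ P.domain := by
  refine ⟨u, y + z • P.S u, rfl, ?_⟩
  rw [Wz, sub_apply, sub_eq_iff_eq_add] at h
  rw [h, map_add, map_smul, smul_apply, mul_apply_eq_comp]

end BSSetup

/-- Section 2.  Under Assumption (Ass) the pseudo-Friedrichs extension
`H_V` is densely defined: its domain `{ψ = S u | W u ∈ Ran S}` is dense in `H`. -/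
theorem BSSetup.domain_dense
    {H H' : Type*} [NormedAddCommGroup H] [InnerProductSpace ℂ H]
    [CompleteSpace H] [NormedAddCommGroup H'] [InnerProductSpace ℂ H'] [CompleteSpace H']
    (P : BSSetup H H') (hAss : P.Ass) :
    Dense {ψ : H | ∃ u y : H, ψ = P.S u ∧ P.W u = P.S y} := by
  obtain ⟨μ, hT, hK⟩ := hAss
  obtain ⟨v, hv⟩ := P.isUnit_Wz hT hK
  have hsurj : Function.Surjective (↑v⁻¹ : H →L[ℂ] H) := fun x =>
    ⟨(v : H →L[ℂ] H) x, by rw [← mul_apply_eq_comp, v.inv_mul, one_apply_eq_self]⟩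
  refine (P.S_dense.comp (hsurj.denseRange.comp P.S_dense (map_continuous _))
    P.S.continuous).mono ?_
  rintro _ ⟨y, rfl⟩
  exact P.S_mem_domain_of_Wz_eq_S (z := μ) (u := (↑v⁻¹ : H →L[ℂ] H) (P.S y))
    (by rw [← hv, ← mul_apply_eq_comp, v.mul_inv, one_apply_eq_self])
end
end

section
/- Suppose Assumption (Ass) holds. Then the pseudo-Friedrichs extension H_V satisfies the generalised second resolvent identity: for all z ∈ ρ(H₀) ∩ ρ(H_V), (H_V − z)^{-1} − (H₀ − z)^{-1} = −[B(H₀ − z̄)^{-1}]* A (H_V − z)^{-1}. -/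
open ContinuousLinearMap

noncomputable section

/-!
Both resolvents are sandwiched between copies of `S = G₀^{-1/2}`: `(H₀ - z)⁻¹ = S² T_z⁻¹` and
`(H_V - z)⁻¹ = S (T_z + b* a)⁻¹ S`, where `T_z = (H₀ - z) G₀^{-1}` commutes with `S`; likewise
`B (H₀ - z̄)⁻¹ = b S T_z̄⁻¹` and `A (H_V - z)⁻¹ = a (T_z + b* a)⁻¹ S`. The identity is therefore the
algebraic second resolvent identity `(T_z + b* a)⁻¹ - T_z⁻¹ = -T_z⁻¹ b* a (T_z + b* a)⁻¹`
conjugated by `S`, once self-adjointness of `S` and `T` gives `(b S T_z̄⁻¹)* = T_z⁻¹ S b*`.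
-/

theorem Commute.ringInverse_right {M₀ : Type*} [MonoidWithZero M₀] {a b : M₀}
    (h : Commute a b) : Commute a (Ring.inverse b) := by
  by_cases hb : IsUnit b
  · rw [← hb.unit_spec, Ring.inverse_unit]
    exact (hb.unit_spec ▸ h).units_inv_right
  · rw [Ring.inverse_non_unit b hb]
    exact Commute.zero_right a

theorem Commute.mul_inverse_add_mul_sub_mul_mul_inverse {R : Type*} [Ring R] {s t v : R}
    (hst : Commute s t) (h : IsUnit t ↔ IsUnit (t + v)) :
    s * Ring.inverse (t + v) * s - s * s * Ring.inverse t
      = -(Ring.inverse t * s * v * Ring.inverse (t + v) * s) := by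
  have hs : Commute s (Ring.inverse t) := hst.ringInverse_right
  calc s * Ring.inverse (t + v) * s - s * s * Ring.inverse t
      = -(s * (Ring.inverse t - Ring.inverse (t + v)) * s) := by
        rw [mul_assoc s s, hs.eq]
        noncomm_ring
    _ = -(Ring.inverse t * s * v * Ring.inverse (t + v) * s) := by
        rw [Ring.inverse_sub_inverse h, add_sub_cancel_left, ← mul_assoc, ← mul_assoc, hs.eq]

namespace BSSetup

variable {H H' : Type*} [NormedAddCommGroup H] [InnerProductSpace ℂ H]
  [CompleteSpace H] [NormedAddCommGroup H'] [InnerProductSpace ℂ H'] [CompleteSpace H']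
  (P : BSSetup H H')

theorem commute_S_Tz (z : ℂ) : Commute P.S (P.Tz z) :=
  Commute.sub_right P.comm (((Commute.refl P.S).mul_right (Commute.refl P.S)).smul_right z)

theorem star_Tz (z : ℂ) : star (P.Tz z) = P.Tz (starRingEnd ℂ z) := by
  simp [Tz, P.T_sa.star_eq, P.S_sa.star_eq]

theorem adjoint_comp_S_mul_inverse_Tz (z : ℂ) :
    adjoint (P.b ∘L (P.S * Ring.inverse (P.Tz (starRingEnd ℂ z))))
      = (Ring.inverse (P.Tz z) * P.S) ∘L adjoint P.b := by
  rw [adjoint_comp, ← star_eq_adjoint (_ * _), star_mul, ← Ring.inverse_star, star_Tz,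
    Complex.conj_conj, P.S_sa.star_eq]

end BSSetup

theorem BSSetup.second_resolvent_identity_general
    {H H' : Type*} [NormedAddCommGroup H] [InnerProductSpace ℂ H]
    [CompleteSpace H] [NormedAddCommGroup H'] [InnerProductSpace ℂ H'] [CompleteSpace H']
    (P : BSSetup H H') (z : ℂ)
    (hz0 : IsUnit (P.Tz z)) (hzV : IsUnit (P.Wz z)) :
    P.S * Ring.inverse (P.Wz z) * P.S - P.S * P.S * Ring.inverse (P.Tz z)
      = -((ContinuousLinearMap.adjoint
            (P.b ∘L (P.S * Ring.inverse (P.Tz (starRingEnd ℂ z))))) ∘L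
          (P.a ∘L (Ring.inverse (P.Wz z) * P.S))) := by
  rw [P.Wz_eq_Tz_add] at hzV ⊢
  rw [P.adjoint_comp_S_mul_inverse_Tz,
    (P.commute_S_Tz z).mul_inverse_add_mul_sub_mul_mul_inverse (iff_of_true hz0 hzV)]
  rfl

/-- Proposition 2.2, generalised second resolvent identity.
Under Assumption (Ass), for all `z ∈ ρ(H₀) ∩ ρ(H_V)`,
`(H_V - z)^{-1} - (H₀ - z)^{-1} = -[B(H₀ - z̄)^{-1}]^* A (H_V - z)^{-1}`.
Here `(H_V - z)^{-1} = S (W - z S²)⁻¹ S`, `(H₀ - z)^{-1} = S² ((H₀-z)G₀^{-1})⁻¹`,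
`B(H₀ - z̄)^{-1} = b ∘ (S ((H₀ - z̄)G₀^{-1})⁻¹)` and
`A(H_V - z)^{-1} = a ∘ ((W - z S²)⁻¹ S)`. -/
theorem BSSetup.second_resolvent_identity
    {H H' : Type*} [NormedAddCommGroup H] [InnerProductSpace ℂ H]
    [CompleteSpace H] [NormedAddCommGroup H'] [InnerProductSpace ℂ H'] [CompleteSpace H']
    (P : BSSetup H H') (hAss : P.Ass) (z : ℂ)
    (hz0 : IsUnit (P.Tz z)) (hzV : IsUnit (P.Wz z)) :
    P.S * Ring.inverse (P.Wz z) * P.S - P.S * P.S * Ring.inverse (P.Tz z)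
      = -((ContinuousLinearMap.adjoint
            (P.b ∘L (P.S * Ring.inverse (P.Tz (starRingEnd ℂ z))))) ∘L
          (P.a ∘L (Ring.inverse (P.Wz z) * P.S))) :=
  BSSetup.second_resolvent_identity_general P z hz0 hzV
end
end

section
/- Suppose Assumption (Ass) holds and let H_V be the pseudo-Friedrichs extension. If H_V ψ = λψ for some λ ∈ ℂ \ σ(H₀) and nonzero ψ ∈ Dom(H_V), then g := Aψ ≠ 0 and K(λ)g = −g. In particular, −1 ∈ σ_p(K(λ)). -/
open ContinuousLinearMap

noncomputable section

/-
A nonzero solution of `(W - μ S²) u = 0` satisfies `(H₀ - μ)G₀⁻¹ u = -b* a u`; since `μ ∈ ρ(H₀)`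
this can be solved for `u`, so `u = -R b* a u` with `R = [(H₀ - μ)G₀⁻¹]⁻¹`. Hence `a u = 0` would force
`u = 0`, and applying `a` gives `K(μ) (a u) = a R b* (a u) = -a u`.
-/

theorem ContinuousLinearMap.ringInverse_apply_apply_s8 {𝕜 E : Type*} [NontriviallyNormedField 𝕜]
    [NormedAddCommGroup E] [NormedSpace 𝕜 E] {f : E →L[𝕜] E} (hf : IsUnit f) (x : E) :
    Ring.inverse f (f x) = x := by
  simpa using congr($(Ring.inverse_mul_cancel f hf) x)

namespace BSSetup

variable {H H' : Type*} [NormedAddCommGroup H] [InnerProductSpace ℂ H]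
  [CompleteSpace H] [NormedAddCommGroup H'] [InnerProductSpace ℂ H'] [CompleteSpace H']
  (P : BSSetup H H')

theorem K_apply (z : ℂ) (y : H') : P.K z y = P.a (Ring.inverse (P.Tz z) (adjoint P.b y)) := rfl

theorem eq_neg_resolvent_of_Wz_apply_eq_zero {μ : ℂ} (hμ : IsUnit (P.Tz μ)) {u : H}
    (heig : P.Wz μ u = 0) : u = -Ring.inverse (P.Tz μ) (adjoint P.b (P.a u)) := by
  have hTz : P.Tz μ u = -adjoint P.b (P.a u) := by
    rw [P.Wz_eq_Tz_add] at heig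
    exact eq_neg_of_add_eq_zero_left heig
  rw [← map_neg, ← hTz, ringInverse_apply_apply_s8 hμ]

end BSSetup

theorem BSSetup.birman_schwinger_forward_general
    {H H' : Type*} [NormedAddCommGroup H] [InnerProductSpace ℂ H]
    [CompleteSpace H] [NormedAddCommGroup H'] [InnerProductSpace ℂ H'] [CompleteSpace H']
    (P : BSSetup H H') (μ : ℂ) (hμ : IsUnit (P.Tz μ))
    (u : H) (hu : u ≠ 0) (heig : P.Wz μ u = 0) :
    P.a u ≠ 0 ∧ P.K μ (P.a u) = -(P.a u) := by
  have hu_eq := P.eq_neg_resolvent_of_Wz_apply_eq_zero hμ heig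
  refine ⟨fun ha => hu ?_, ?_⟩
  · rw [hu_eq, ha, map_zero, map_zero, neg_zero]
  · rw [K_apply, ← neg_eq_iff_eq_neg.mpr hu_eq, map_neg]

/-- Theorem 3.1.  Under Assumption (Ass), if `H_V ψ = μ ψ` for some
`μ ∈ ℂ \ σ(H₀)` and nonzero `ψ = S u ∈ Dom(H_V)` (the eigenvalue equation being
encoded by `u ≠ 0` and `(W - μ S²) u = 0`), then `g := Aψ = a u ≠ 0` and
`K(μ) g = -g`; in particular `-1 ∈ σ_p(K(μ))`. -/
theorem BSSetup.birman_schwinger_forward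
    {H H' : Type*} [NormedAddCommGroup H] [InnerProductSpace ℂ H]
    [CompleteSpace H] [NormedAddCommGroup H'] [InnerProductSpace ℂ H'] [CompleteSpace H']
    (P : BSSetup H H') (hAss : P.Ass) (μ : ℂ) (hμ : IsUnit (P.Tz μ))
    (u : H) (hu : u ≠ 0) (heig : P.Wz μ u = 0) :
    P.a u ≠ 0 ∧ P.K μ (P.a u) = -(P.a u) :=
  BSSetup.birman_schwinger_forward_general P μ hμ u hu heig
end
end

section
/- Suppose Assumption (Ass) holds and that H_V ψ = λψ for some λ ∈ σ_c(H₀) (so λ is real and not an eigenvalue of H₀) and nonzero ψ ∈ Dom(H_V). Then g := Aψ ≠ 0 and K(λ + iε)g converges weakly to −g as ε → 0 (from above or below). -/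
open ContinuousLinearMap

noncomputable section

/-!
Because `μ ∈ σ_c(H₀)`, the number `μ` is real and `H₀ - μ` is injective with dense range. The
eigenvalue equation reads `(H₀ - μ) ψ = -B^* A ψ`, so `A ψ = 0` would make `ψ` an eigenvector of
`H₀`. For `z = μ + iε` the resolvent identity gives `K(z) A ψ = -A ψ - iε A (H₀ - z)⁻¹ ψ`, and the
error term tends weakly to zero: the operators `iε G₀ (H₀ - z)⁻¹` are uniformly bounded for small
`ε`, and composed with the self-adjoint `(H₀ - μ) G₀⁻¹` they become `iε (1 + iε (H₀ - z)⁻¹)`,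
which tends to zero in norm. This gives weak convergence on the dense range of `(H₀ - μ) G₀⁻¹`,
hence everywhere.
-/

open Filter Topology InnerProductSpace

section

variable {𝕜 E : Type*} [RCLike 𝕜] [NormedAddCommGroup E] [InnerProductSpace 𝕜 E]

theorem ContinuousLinearMap.isUnit_of_antilipschitz_of_injective_adjoint [CompleteSpace E]
    {f : E →L[𝕜] E} {c : NNReal} (hf : AntilipschitzWith c f)
    (hadj : Function.Injective (adjoint f)) : IsUnit f := by
  rw [isUnit_iff_bijective, bijective_iff_dense_range_and_antilipschitz,
    Submodule.topologicalClosure_eq_top_iff, orthogonal_range]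
  exact ⟨LinearMap.ker_eq_bot.mpr hadj, c, hf⟩

theorem tendsto_inner_zero_of_dense {ι : Type*} {l : Filter ι} {f : ι → E} {C : ℝ}
    (hf : ∀ᶠ i in l, ‖f i‖ ≤ C) {s : Set E} (hs : Dense s)
    (h : ∀ y ∈ s, Tendsto (fun i => ⟪y, f i⟫_𝕜) l (𝓝 0)) (x : E) :
    Tendsto (fun i => ⟪x, f i⟫_𝕜) l (𝓝 0) := by
  rw [Metric.tendsto_nhds]
  intro δ hδ
  obtain ⟨y, hys, hxy⟩ := Metric.mem_closure_iff.mp (hs x) (δ / 2 / (|C| + 1)) (by positivity)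
  filter_upwards [hf, Metric.tendsto_nhds.mp (h y hys) (δ / 2) (by positivity)] with i hfi hyi
  rw [dist_zero_right] at hyi ⊢
  rw [dist_eq_norm] at hxy
  have hfi' : ‖f i‖ ≤ |C| + 1 := by linarith [le_abs_self C]
  calc ‖⟪x, f i⟫_𝕜‖ = ‖⟪x - y, f i⟫_𝕜 + ⟪y, f i⟫_𝕜‖ := by rw [inner_sub_left, sub_add_cancel]
    _ ≤ ‖x - y‖ * (|C| + 1) + ‖⟪y, f i⟫_𝕜‖ := by
      grw [norm_add_le, norm_inner_le_norm, hfi']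
    _ < δ / 2 / (|C| + 1) * (|C| + 1) + δ / 2 := by gcongr
    _ = δ := by field_simp; ring

end

namespace BSSetup

variable {H H' : Type*} [NormedAddCommGroup H] [InnerProductSpace ℂ H]
  [CompleteSpace H] [NormedAddCommGroup H'] [InnerProductSpace ℂ H'] [CompleteSpace H']
  (P : BSSetup H H')

/-- `G₀ (H₀ - z)⁻¹`; the junk value `0` when `z ∈ σ(H₀)`. -/
def Rz (z : ℂ) : H →L[ℂ] H := Ring.inverse (P.Tz z)

theorem Tz_eq_Tz_sub_smul (z w : ℂ) : P.Tz z = P.Tz w - (z - w) • (P.S * P.S) := by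
  simp only [Tz, sub_smul]
  abel

theorem adjoint_Tz (z : ℂ) : adjoint (P.Tz z) = P.Tz (starRingEnd ℂ z) := by
  rw [← star_eq_adjoint, Tz, star_sub, star_smul, star_mul, P.S_sa.star_eq, P.T_sa.star_eq,
    Complex.star_def]
  rfl

theorem norm_S_apply_le (x : H) : ‖P.S x‖ ≤ ‖x‖ := by
  simpa using P.S.le_of_opNorm_le P.S_norm x

theorem norm_T_apply (x : H) : ‖P.T x‖ = ‖(1 - P.S * P.S) x‖ := by
  have hSS : IsSelfAdjoint (P.S * P.S) := by
    simpa only [P.S_sa.star_eq] using IsSelfAdjoint.star_mul_self P.S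
  have hM : adjoint (1 - P.S * P.S) = 1 - P.S * P.S := ((IsSelfAdjoint.one _).sub hSS).adjoint_eq
  rw [apply_norm_eq_sqrt_inner_adjoint_left, apply_norm_eq_sqrt_inner_adjoint_left (1 - P.S * P.S),
    P.T_sa.adjoint_eq, hM]
  exact congrArg (fun M : H →L[ℂ] H => √(RCLike.re ⟪M x, x⟫_ℂ)) P.T_sq

theorem inner_S_mul_S_apply (x : H) : ⟪x, (P.S * P.S) x⟫_ℂ = ((‖P.S x‖ ^ 2 : ℝ) : ℂ) := by
  rw [mul_apply_eq_comp, ← adjoint_inner_left, P.S_sa.adjoint_eq, inner_self_eq_norm_sq_to_K]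
  norm_cast

theorem im_inner_Tz_apply (z : ℂ) (x : H) :
    (⟪x, P.Tz z x⟫_ℂ).im = -z.im * ‖P.S x‖ ^ 2 := by
  have hT : (⟪x, P.T x⟫_ℂ).im = 0 := P.T_sa.isSymmetric.im_inner_self_apply x
  simp only [Tz, sub_apply, smul_apply, inner_sub_right, inner_smul_right, inner_S_mul_S_apply,
    Complex.sub_im, Complex.mul_im, Complex.ofReal_re, Complex.ofReal_im, hT]
  ring

theorem abs_im_mul_norm_S_apply_sq_le (z : ℂ) (x : H) :
    |z.im| * ‖P.S x‖ ^ 2 ≤ ‖x‖ * ‖P.Tz z x‖ := by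
  calc |z.im| * ‖P.S x‖ ^ 2 = |(⟪x, P.Tz z x⟫_ℂ).im| := by
        rw [im_inner_Tz_apply, abs_mul, abs_neg, abs_of_nonneg (sq_nonneg ‖P.S x‖)]
    _ ≤ ‖x‖ * ‖P.Tz z x‖ := (Complex.abs_im_le_norm _).trans (norm_inner_le_norm _ _)

theorem norm_sq_le_norm_mul_norm_T_apply_add (x : H) : ‖x‖ ^ 2 ≤ ‖x‖ * ‖P.T x‖ + ‖P.S x‖ ^ 2 := by
  have hsplit : ⟪x, x⟫_ℂ = ⟪x, (1 - P.S * P.S) x⟫_ℂ + ⟪x, (P.S * P.S) x⟫_ℂ := by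
    rw [← inner_add_right, sub_apply, sub_add_cancel, one_apply_eq_self]
  have hre := congrArg Complex.re hsplit
  rw [inner_S_mul_S_apply, Complex.add_re, Complex.ofReal_re] at hre
  rw [← inner_self_eq_norm_sq (𝕜 := ℂ), RCLike.re_to_complex, hre, P.norm_T_apply]
  gcongr
  exact (Complex.re_le_norm _).trans (norm_inner_le_norm _ _)

theorem norm_T_apply_le (z : ℂ) (x : H) : ‖P.T x‖ ≤ ‖P.Tz z x‖ + ‖z‖ * ‖P.S x‖ := by
  calc ‖P.T x‖ = ‖P.Tz z x + z • P.S (P.S x)‖ := by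
        rw [Tz, sub_apply, smul_apply, mul_apply_eq_comp, sub_add_cancel]
    _ ≤ ‖P.Tz z x‖ + ‖z‖ * ‖P.S x‖ := by
      grw [norm_add_le, norm_smul, P.norm_S_apply_le (P.S x)]

theorem abs_im_mul_norm_le_mul_norm_Tz_apply (z : ℂ) (x : H) :
    |z.im| * ‖x‖ ≤ 4 / 3 * (|z.im| + 1 + ‖z‖ ^ 2) * ‖P.Tz z x‖ := by
  have h₁ := P.abs_im_mul_norm_S_apply_sq_le z x
  have h₂ := P.norm_sq_le_norm_mul_norm_T_apply_add x
  have h₃ := P.norm_T_apply_le z x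
  rcases (norm_nonneg x).eq_or_lt with hx | hx
  · rw [← hx, mul_zero]
    positivity
  have h₄ : ‖x‖ ^ 2 ≤ ‖x‖ * ‖P.Tz z x‖ + ‖z‖ * ‖x‖ * ‖P.S x‖ + ‖P.S x‖ ^ 2 := by
    nlinarith [mul_le_mul_of_nonneg_left h₃ hx.le]
  -- the cross term is absorbed by `‖z‖ ‖x‖ ‖S x‖ ≤ ‖x‖² / 4 + ‖z‖² ‖S x‖²`
  have h₅ : 3 / 4 * |z.im| * ‖x‖ ^ 2 ≤ (|z.im| + 1 + ‖z‖ ^ 2) * ‖x‖ * ‖P.Tz z x‖ := by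
    nlinarith [mul_le_mul_of_nonneg_left h₄ (abs_nonneg z.im),
      mul_nonneg (abs_nonneg z.im) (sq_nonneg (‖x‖ - 2 * ‖z‖ * ‖P.S x‖)),
      mul_le_mul_of_nonneg_left h₁ (sq_nonneg ‖z‖)]
  refine le_of_mul_le_mul_right ?_ hx
  linarith

theorem antilipschitz_Tz {z : ℂ} (hz : z.im ≠ 0) : ∃ c, AntilipschitzWith c (P.Tz z) := by
  have hd : 0 < |z.im| := abs_pos.mpr hz
  refine ⟨(4 / 3 * (|z.im| + 1 + ‖z‖ ^ 2) / |z.im|).toNNReal,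
    antilipschitz_of_bound _ fun x => ?_⟩
  rw [Real.coe_toNNReal _ (by positivity), div_mul_eq_mul_div, le_div_iff₀ hd, mul_comm]
  exact P.abs_im_mul_norm_le_mul_norm_Tz_apply z x

theorem isUnit_Tz {z : ℂ} (hz : z.im ≠ 0) : IsUnit (P.Tz z) := by
  obtain ⟨c, hc⟩ := P.antilipschitz_Tz hz
  obtain ⟨c', hc'⟩ := P.antilipschitz_Tz (z := starRingEnd ℂ z) (by simpa using hz)
  exact isUnit_of_antilipschitz_of_injective_adjoint hc (P.adjoint_Tz z ▸ hc'.injective)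

theorem Tz_Rz_apply {z : ℂ} (hz : IsUnit (P.Tz z)) (y : H) : P.Tz z (P.Rz z y) = y :=
  congr($(Ring.mul_inverse_cancel _ hz) y)

theorem Rz_Tz_apply {z : ℂ} (hz : IsUnit (P.Tz z)) (x : H) : P.Rz z (P.Tz z x) = x :=
  congr($(Ring.inverse_mul_cancel _ hz) x)

theorem Tz_apply_Rz_apply {z : ℂ} (hz : IsUnit (P.Tz z)) (w : ℂ) (y : H) :
    P.Tz w (P.Rz z y) = y + (z - w) • P.S (P.S (P.Rz z y)) := by
  rw [P.Tz_eq_Tz_sub_smul w z, sub_apply, smul_apply, P.Tz_Rz_apply hz, mul_apply_eq_comp,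
    ← neg_sub z w, neg_smul, sub_neg_eq_add]

theorem isUnit_Tz_add_mul_I {μ : ℂ} (hμ : μ.im = 0) {ε : ℝ} (hε : ε ≠ 0) :
    IsUnit (P.Tz (μ + ε * Complex.I)) :=
  P.isUnit_Tz (by simpa [hμ] using hε)

theorem eventually_norm_smul_Rz_le {μ : ℂ} (hμ : μ.im = 0) (y : H) :
    ∀ᶠ ε : ℝ in 𝓝[≠] 0,
      ‖((ε : ℂ) * Complex.I) • P.Rz (μ + ε * Complex.I) y‖ ≤ 4 / 3 * (2 + (‖μ‖ + 1) ^ 2) * ‖y‖ := by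
  have hsmall : ∀ᶠ ε : ℝ in 𝓝[≠] 0, |ε| ≤ 1 :=
    nhdsWithin_le_nhds (eventually_abs_sub_lt 0 one_pos |>.mono fun ε h => by simpa using h.le)
  filter_upwards [self_mem_nhdsWithin, hsmall] with ε hε hε1
  have hz : ‖μ + ε * Complex.I‖ ≤ ‖μ‖ + 1 := by
    grw [norm_add_le, norm_mul, Complex.norm_I, Complex.norm_real, Real.norm_eq_abs, hε1, mul_one]
  have h := P.abs_im_mul_norm_le_mul_norm_Tz_apply (μ + ε * Complex.I) (P.Rz (μ + ε * Complex.I) y)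
  have him : (μ + ε * Complex.I).im = ε := by simp [hμ]
  rw [P.Tz_Rz_apply (P.isUnit_Tz_add_mul_I hμ hε), him] at h
  rw [norm_smul, norm_mul, Complex.norm_I, Complex.norm_real, Real.norm_eq_abs, mul_one]
  refine h.trans ?_
  gcongr
  linarith

theorem tendsto_Tz_smul_Rz {μ : ℂ} (hμ : μ.im = 0) (v : H) :
    Tendsto (fun ε : ℝ => P.Tz μ (((ε : ℂ) * Complex.I) • P.Rz (μ + ε * Complex.I) v))
      (𝓝[≠] 0) (𝓝 0) := by
  set C := 4 / 3 * (2 + (‖μ‖ + 1) ^ 2)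
  have hlim : Tendsto (fun ε : ℝ => |ε| * ((1 + C) * ‖v‖)) (𝓝[≠] 0) (𝓝 0) := by
    simpa using ((continuous_abs.tendsto 0).mul_const ((1 + C) * ‖v‖)).mono_left
      nhdsWithin_le_nhds
  refine squeeze_zero_norm' ?_ hlim
  filter_upwards [self_mem_nhdsWithin, P.eventually_norm_smul_Rz_le hμ v] with ε hε hbound
  have hεI : ‖(ε : ℂ) * Complex.I‖ = |ε| := by
    rw [norm_mul, Complex.norm_I, Complex.norm_real, Real.norm_eq_abs, mul_one]
  have hTz : P.Tz μ (((ε : ℂ) * Complex.I) • P.Rz (μ + ε * Complex.I) v)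
      = ((ε : ℂ) * Complex.I) • v
        + ((ε : ℂ) * Complex.I) •
          P.S (P.S (((ε : ℂ) * Complex.I) • P.Rz (μ + ε * Complex.I) v)) := by
    simp only [map_smul, P.Tz_apply_Rz_apply (P.isUnit_Tz_add_mul_I hμ hε), add_sub_cancel_left,
      smul_add]
  rw [hTz]
  grw [norm_add_le, norm_smul, norm_smul, hεI, P.norm_S_apply_le, P.norm_S_apply_le, hbound]
  exact le_of_eq (by ring)

theorem tendsto_inner_smul_Rz {μ : ℂ} (hμ : μ.im = 0) (hdense : DenseRange (P.Tz μ)) (w v : H) :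
    Tendsto (fun ε : ℝ => ⟪w, ((ε : ℂ) * Complex.I) • P.Rz (μ + ε * Complex.I) v⟫_ℂ)
      (𝓝[≠] 0) (𝓝 0) := by
  have hsa : adjoint (P.Tz μ) = P.Tz μ := by
    rw [adjoint_Tz, Complex.conj_eq_iff_im.mpr hμ]
  refine tendsto_inner_zero_of_dense (P.eventually_norm_smul_Rz_le hμ v) hdense ?_ w
  rintro _ ⟨x, rfl⟩
  simpa only [← hsa ▸ adjoint_inner_right (P.Tz μ), inner_zero_right] using
    tendsto_const_nhds.inner (P.tendsto_Tz_smul_Rz hμ v)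

theorem Tz_apply_of_Wz_apply_eq_zero {μ : ℂ} {u : H} (h : P.Wz μ u = 0) :
    P.Tz μ u = -adjoint P.b (P.a u) := by
  apply eq_neg_of_add_eq_zero_left
  rw [← h, Wz, W, Tz]
  simp only [sub_apply, add_apply, comp_apply]
  abel

theorem K_apply_a_of_Tz_apply {μ z : ℂ} {u : H} (hu : P.Tz μ u = -adjoint P.b (P.a u))
    (hz : IsUnit (P.Tz z)) :
    P.K z (P.a u) = -P.a u - (z - μ) • P.a (P.Rz z (P.S (P.S u))) := by
  have h : adjoint P.b (P.a u) = -P.Tz z u - (z - μ) • P.S (P.S u) := by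
    rw [P.Tz_eq_Tz_sub_smul z μ, sub_apply, hu, smul_apply, mul_apply_eq_comp]
    abel
  rw [K, comp_apply, comp_apply, ← Rz, h, map_sub, map_neg, P.Rz_Tz_apply hz, map_smul,
    map_sub, map_neg, map_smul]

end BSSetup

theorem BSSetup.birman_schwinger_embedded_general
    {H H' : Type*} [NormedAddCommGroup H] [InnerProductSpace ℂ H]
    [CompleteSpace H] [NormedAddCommGroup H'] [InnerProductSpace ℂ H'] [CompleteSpace H']
    (P : BSSetup H H') (μ : ℂ) (hμ : μ ∈ P.contSpec)
    (u : H) (hu : u ≠ 0) (heig : P.Wz μ u = 0) :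
    P.a u ≠ 0 ∧
    ∀ φ : H', Filter.Tendsto
      (fun ε : ℝ => (inner ℂ φ (P.K (μ + (ε:ℂ) * Complex.I) (P.a u)) : ℂ))
      (nhdsWithin 0 {0}ᶜ) (nhds (-(inner ℂ φ (P.a u) : ℂ))) := by
  obtain ⟨hnotunit, hinj, hdense⟩ := hμ
  have hreal : μ.im = 0 := by
    by_contra h
    exact hnotunit (P.isUnit_Tz h)
  have hTu := P.Tz_apply_of_Wz_apply_eq_zero heig
  refine ⟨fun hau => hu (hinj u (by rw [hTu, hau, map_zero, neg_zero])), fun φ => ?_⟩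
  have herr := P.tendsto_inner_smul_Rz hreal hdense (adjoint P.a φ) (P.S (P.S u))
  have hlim : Tendsto (fun ε : ℝ => -⟪φ, P.a u⟫_ℂ
      - ⟪adjoint P.a φ, ((ε : ℂ) * Complex.I) • P.Rz (μ + ε * Complex.I) (P.S (P.S u))⟫_ℂ)
      (𝓝[≠] 0) (𝓝 (-⟪φ, P.a u⟫_ℂ)) := by
    simpa using tendsto_const_nhds.sub herr
  refine hlim.congr' ?_
  filter_upwards [self_mem_nhdsWithin] with ε hε
  rw [P.K_apply_a_of_Tz_apply hTu (P.isUnit_Tz_add_mul_I hreal hε)]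
  simp only [add_sub_cancel_left, inner_sub_right, inner_neg_right, inner_smul_right,
    adjoint_inner_left]

/-- Theorem 3.3.  Under Assumption (Ass), if `H_V ψ = μ ψ` for some
`μ ∈ σ_c(H₀)` and nonzero `ψ = S u ∈ Dom(H_V)` (encoded by `u ≠ 0`, `(W - μ S²) u = 0`),
then `g := Aψ = a u ≠ 0` and `K(μ + iε) g ⇀ -g` weakly as `ε → 0` (from above or
below), i.e. `⟪φ, K(μ+iε) g⟫ → -⟪φ, g⟫` for every `φ ∈ H'`. -/
theorem BSSetup.birman_schwinger_embedded
    {H H' : Type*} [NormedAddCommGroup H] [InnerProductSpace ℂ H]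
    [CompleteSpace H] [NormedAddCommGroup H'] [InnerProductSpace ℂ H'] [CompleteSpace H']
    (P : BSSetup H H') (hAss : P.Ass) (μ : ℂ) (hμ : μ ∈ P.contSpec)
    (u : H) (hu : u ≠ 0) (heig : P.Wz μ u = 0) :
    P.a u ≠ 0 ∧
    ∀ φ : H', Filter.Tendsto
      (fun ε : ℝ => (inner ℂ φ (P.K (μ + (ε:ℂ) * Complex.I) (P.a u)) : ℂ))
      (nhdsWithin 0 {0}ᶜ) (nhds (-(inner ℂ φ (P.a u) : ℂ))) :=
  BSSetup.birman_schwinger_embedded_general P μ hμ u hu heig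
end
end

section
/- Suppose Assumption (Ass) holds. If λ ∈ σ_p(H_V) and λ ∉ σ(H₀), then ‖K(λ)‖ ≥ 1. -/
open ContinuousLinearMap

noncomputable section

/- Birman–Schwinger principle: if `(W - μ S²) u = 0` with `u ≠ 0`, then `v = a u` satisfies
`b^* v = -(H₀ - μ) G₀^{-1} u`, hence `K(μ) v = -v`, and `v ≠ 0` because `H₀ - μ` is
invertible. So `-1` is an eigenvalue of `K(μ)`, and an eigenvalue is bounded in modulus by
the norm. -/

theorem ContinuousLinearMap.norm_le_opNorm_of_apply_eq_smul {𝕜 E : Type*}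
    [NontriviallyNormedField 𝕜] [NormedAddCommGroup E] [NormedSpace 𝕜 E] (f : E →L[𝕜] E)
    {c : 𝕜} {v : E} (hv : v ≠ 0) (hfv : f v = c • v) : ‖c‖ ≤ ‖f‖ := by
  have hle : ‖c‖ * ‖v‖ ≤ ‖f‖ * ‖v‖ :=
    calc ‖c‖ * ‖v‖ = ‖f v‖ := by rw [hfv, norm_smul]
      _ ≤ ‖f‖ * ‖v‖ := f.le_opNorm v
  exact le_of_mul_le_mul_right hle (norm_pos_iff.mpr hv)

theorem ContinuousLinearMap.ring_inverse_apply_apply {R M : Type*} [Semiring R]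
    [TopologicalSpace M] [AddCommMonoid M] [Module R M] {f : M →L[R] M} (hf : IsUnit f)
    (x : M) : Ring.inverse f (f x) = x := by
  rw [← mul_apply_eq_comp, Ring.inverse_mul_cancel _ hf, one_apply_eq_self]

namespace BSSetup

variable {H H' : Type*} [NormedAddCommGroup H] [InnerProductSpace ℂ H]
  [CompleteSpace H] [NormedAddCommGroup H'] [InnerProductSpace ℂ H'] [CompleteSpace H']
  (P : BSSetup H H')

theorem Tz_apply_eq_neg_of_Wz_apply_eq_zero {z : ℂ} {u : H} (h : P.Wz z u = 0) :
    P.Tz z u = -adjoint P.b (P.a u) := by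
  rw [Wz_eq_Tz_add, add_apply, comp_apply] at h
  exact eq_neg_of_add_eq_zero_left h

theorem K_apply_a_eq_neg_of_Wz_apply_eq_zero {z : ℂ} (hz : IsUnit (P.Tz z)) {u : H}
    (h : P.Wz z u = 0) : P.K z (P.a u) = -P.a u := by
  have hinv : Ring.inverse (P.Tz z) (adjoint P.b (P.a u)) = -u := by
    rw [← neg_neg (adjoint P.b (P.a u)), ← P.Tz_apply_eq_neg_of_Wz_apply_eq_zero h, map_neg,
      ring_inverse_apply_apply hz]
  simp only [K, comp_apply, hinv, map_neg]

theorem a_apply_ne_zero_of_Wz_apply_eq_zero {z : ℂ} (hz : IsUnit (P.Tz z)) {u : H}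
    (hu : u ≠ 0) (h : P.Wz z u = 0) : P.a u ≠ 0 := by
  intro hau
  have hTu : P.Tz z u = 0 := by
    rw [P.Tz_apply_eq_neg_of_Wz_apply_eq_zero h, hau, map_zero, neg_zero]
  exact hu (by rw [← ring_inverse_apply_apply hz u, hTu, map_zero])

end BSSetup

theorem BSSetup.norm_K_ge_one_of_eigenvalue_general
    {H H' : Type*} [NormedAddCommGroup H] [InnerProductSpace ℂ H]
    [CompleteSpace H] [NormedAddCommGroup H'] [InnerProductSpace ℂ H'] [CompleteSpace H']
    (P : BSSetup H H') (μ : ℂ) (hμ : IsUnit (P.Tz μ))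
    (u : H) (hu : u ≠ 0) (heig : P.Wz μ u = 0) :
    1 ≤ ‖P.K μ‖ := by
  have hK : P.K μ (P.a u) = (-1 : ℂ) • P.a u := by
    rw [neg_one_smul, P.K_apply_a_eq_neg_of_Wz_apply_eq_zero hμ heig]
  simpa using (P.K μ).norm_le_opNorm_of_apply_eq_smul
    (P.a_apply_ne_zero_of_Wz_apply_eq_zero hμ hu heig) hK

/-- Corollary 3.4 (i).  Under Assumption (Ass), if `μ ∈ σ_p(H_V)`
(encoded by an eigenvector `ψ = S u`, `u ≠ 0`, `(W - μ S²) u = 0`) and `μ ∉ σ(H₀)`,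
then `‖K(μ)‖ ≥ 1`. -/
theorem BSSetup.norm_K_ge_one_of_eigenvalue
    {H H' : Type*} [NormedAddCommGroup H] [InnerProductSpace ℂ H]
    [CompleteSpace H] [NormedAddCommGroup H'] [InnerProductSpace ℂ H'] [CompleteSpace H']
    (P : BSSetup H H') (hAss : P.Ass) (μ : ℂ) (hμ : IsUnit (P.Tz μ))
    (u : H) (hu : u ≠ 0) (heig : P.Wz μ u = 0) :
    1 ≤ ‖P.K μ‖ :=
  BSSetup.norm_K_ge_one_of_eigenvalue_general P μ hμ u hu heig
end
end
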